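/- Let A be an n-by-n complex matrix and B an m-by-m complex matrix that is unitarily similar to a block-shift matrix with k superdiagonal blocks B_1, ..., B_k (zero diagonal blocks). If ‖A^k‖ = ‖A‖^k, then w(A ⊗ B) = ‖A‖·w(B). -/

import Mathlib

open scoped Kronecker InnerProductSpace

/-- The operator norm (spectral norm) of a complex matrix, viewed as an operator
on Euclidean space. -/
noncomputable def opNorm {n : Type*} [Fintype n] [DecidableEq n] (A : Matrix n n ℂ) : ℝ :=
  ‖Matrix.toEuclideanCLM (𝕜 := ℂ) A‖

/-- The numerical radius of a complex matrix: the supremum of `|⟨Ax, x⟩|` over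
unit vectors `x`. -/
noncomputable def numRadius {n : Type*} [Fintype n] [DecidableEq n] (A : Matrix n n ℂ) : ℝ :=
  sSup {r : ℝ | ∃ x : EuclideanSpace ℂ n, ‖x‖ = 1 ∧
    r = ‖⟪x, Matrix.toEuclideanLin A x⟫_ℂ‖}

/-- `A` and `B` are unitarily similar (as operators on Euclidean spaces, allowing
different index types of the same dimension). -/
def UnitSim {n m : Type*} [Fintype n] [DecidableEq n] [Fintype m] [DecidableEq m]
    (A : Matrix n n ℂ) (B : Matrix m m ℂ) : Prop :=
  ∃ e : EuclideanSpace ℂ n ≃ₗᵢ[ℂ] EuclideanSpace ℂ m,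
    ∀ x, Matrix.toEuclideanLin B (e x) = e (Matrix.toEuclideanLin A x)

/-!
Put `a = ‖A‖`. The columns `z_j` of a vector `z` on `Fin n × Fin m` give
`⟨z, (A ⊗ C) z⟩ = ∑_{j,j'} C j j' ⟨z_j, A z_j'⟩`, and grouping the rows `j` of `C` by level
writes this as `∑_l tr (A X_l)` for rank-one sums `X_l`.

Upper bound: `|tr (A X_l)| ≤ a ‖X_l‖₁`, and the trace norm `‖X_l‖₁` is `tr (U_l X_l)` for an
isometry `U_l`. Since `C` only maps level `l + 1` to level `l`, the products
`W_l = U_0 ⋯ U_{l-1}` turn the columns into `y_j = W_{f j} z_j` with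
`∑_l ‖X_l‖₁ = ∑_{j,j'} C j j' ⟨y_j, y_j'⟩ = ⟨y, (I ⊗ C) y⟩`, which is at most `w(C) ‖z‖²`.

Lower bound: `‖A^k‖ = a^k` yields unit vectors `y_0, …, y_k` with `A y_{l+1} = a y_l`;
the vector with columns `u_j y_{f j}` has the norm of `u` and quadratic form `a ⟨u, C u⟩`.
-/

namespace LinearMap

variable {𝕜 E : Type*} [RCLike 𝕜] [NormedAddCommGroup E] [InnerProductSpace 𝕜 E]
  [FiniteDimensional 𝕜 E]

theorem exists_orthonormalBasis_apply_eq_norm_smul (X : E →ₗ[𝕜] E) :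
    ∃ b c : OrthonormalBasis (Fin (Module.finrank 𝕜 E)) 𝕜 E,
      ∀ i, X (b i) = (‖X (b i)‖ : 𝕜) • c i := by
  have hX := X.isSymmetric_adjoint_mul_self
  let b := hX.eigenvectorBasis rfl
  have horth : Pairwise fun i j => ⟪X (b i), X (b j)⟫_𝕜 = 0 := by
    intro i j hij
    rw [← adjoint_inner_right, ← Module.End.mul_apply, hX.apply_eigenvectorBasis,
      inner_smul_right, b.orthonormal.2 hij, mul_zero]
  let s : Set (Fin (Module.finrank 𝕜 E)) := {i | X (b i) ≠ 0}
  let v i := (‖X (b i)‖ : 𝕜)⁻¹ • X (b i)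
  have hv : Orthonormal 𝕜 (s.domRestrict v) := by
    refine ⟨fun i => ?_, fun i j hij => ?_⟩
    · have : X (b i) ≠ 0 := i.2
      simp only [Set.domRestrict_apply, v, norm_smul, norm_inv, RCLike.norm_ofReal, abs_norm]
      exact inv_mul_cancel₀ (norm_ne_zero_iff.2 this)
    · simp only [Set.domRestrict_apply, v, inner_smul_left, inner_smul_right,
        horth (Subtype.coe_ne_coe.2 hij), mul_zero]
  obtain ⟨c, hc⟩ := hv.exists_orthonormalBasis_extension_of_card_eq (Fintype.card_fin _).symm
  refine ⟨b, c, fun i => ?_⟩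
  by_cases hi : X (b i) = 0
  · simp [hi]
  · rw [hc i hi, smul_inv_smul₀ (by simpa using hi)]

end LinearMap

namespace ContinuousLinearMap

section TraceDuality

variable {𝕜 E : Type*} [RCLike 𝕜] [NormedAddCommGroup E] [InnerProductSpace 𝕜 E]
  [FiniteDimensional 𝕜 E]

/- `U ∘ X = |X|`: `U` is the adjoint of the polar factor of `X`, and `t` is the trace norm of `X`
(the sum of its singular values). -/
theorem exists_linearIsometry_trace_comp_eq_and_norm_trace_comp_le (X : E →L[𝕜] E) :
    ∃ (U : E →ₗᵢ[𝕜] E) (t : ℝ), LinearMap.trace 𝕜 E (U.toContinuousLinearMap ∘L X) = t ∧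
      ∀ S : E →L[𝕜] E, ‖LinearMap.trace 𝕜 E (S ∘L X)‖ ≤ ‖S‖ * t := by
  obtain ⟨b, c, hbc⟩ := LinearMap.exists_orthonormalBasis_apply_eq_norm_smul (X : E →ₗ[𝕜] E)
  simp only [ContinuousLinearMap.coe_coe] at hbc
  let U := (c.equiv b (Equiv.refl _)).toLinearIsometry
  refine ⟨U, ∑ i, ‖X (b i)‖, ?_, fun S => ?_⟩
  · rw [LinearMap.trace_eq_sum_inner _ b]
    push_cast
    refine Finset.sum_congr rfl fun i _ => ?_
    simp only [Function.comp_apply]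
    nth_rw 1 [hbc i]
    simp [U, inner_smul_right, b.orthonormal.1 i]
  · rw [LinearMap.trace_eq_sum_inner _ b, Finset.mul_sum]
    refine (norm_sum_le _ _).trans (Finset.sum_le_sum fun i _ => ?_)
    calc ‖⟪b i, S (X (b i))⟫_𝕜‖ ≤ ‖b i‖ * (‖S‖ * ‖X (b i)‖) :=
          (norm_inner_le_norm _ _).trans (by gcongr; exact S.le_opNorm _)
      _ = ‖S‖ * ‖X (b i)‖ := by rw [b.orthonormal.1 i, one_mul]

end TraceDuality

section PowerChain

variable {𝕜 E F : Type*} [RCLike 𝕜] [NormedAddCommGroup E] [NormedSpace 𝕜 E]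
  [NormedAddCommGroup F] [NormedSpace 𝕜 F]

theorem exists_norm_le_one_norm_apply_eq [ProperSpace E] (T : E →L[𝕜] F) :
    ∃ x : E, ‖x‖ ≤ 1 ∧ ‖T x‖ = ‖T‖ := by
  have hK := (isCompact_closedBall (0 : E) 1).image T.continuous.norm
  obtain ⟨x, hx, hTx⟩ := hK.sSup_mem ((Metric.nonempty_closedBall.2 zero_le_one).image _)
  exact ⟨x, mem_closedBall_zero_iff.1 hx, hTx.trans T.sSup_unitClosedBall_eq_norm⟩

theorem norm_pow_apply_le (T : E →L[𝕜] E) (j : ℕ) (v : E) : ‖(T ^ j) v‖ ≤ ‖T‖ ^ j * ‖v‖ := by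
  induction j with
  | zero => simp
  | succ j ih =>
    calc ‖(T ^ (j + 1)) v‖ = ‖T ((T ^ j) v)‖ := by rw [pow_succ', mul_apply_eq_comp]
      _ ≤ ‖T‖ * (‖T‖ ^ j * ‖v‖) := (T.le_opNorm _).trans (by gcongr)
      _ = ‖T‖ ^ (j + 1) * ‖v‖ := by ring

/- If `‖T^k x‖ = ‖T‖^k` with `‖x‖ ≤ 1`, no step of the orbit loses norm, so the normalised
vectors `T^(k-l) x / ‖T‖^(k-l)` form the chain. -/
theorem exists_norm_eq_one_apply_succ_eq_norm_smul [ProperSpace E] (T : E →L[𝕜] E) {k : ℕ}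
    (hk : ‖T ^ k‖ = ‖T‖ ^ k) (hT : 0 < ‖T‖) :
    ∃ y : ℕ → E, (∀ l ≤ k, ‖y l‖ = 1) ∧ ∀ l < k, T (y (l + 1)) = (‖T‖ : 𝕜) • y l := by
  set a := ‖T‖
  obtain ⟨x, hx, hxk⟩ := (T ^ k).exists_norm_le_one_norm_apply_eq
  have hpow j (hj : j ≤ k) : ‖(T ^ j) x‖ = a ^ j := by
    refine ((T.norm_pow_apply_le j x).trans (mul_le_of_le_one_right (by positivity) hx)).antisymm
      (le_of_mul_le_mul_left ?_ (pow_pos hT (k - j)))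
    calc a ^ (k - j) * a ^ j = ‖(T ^ (k - j)) ((T ^ j) x)‖ := by
          rw [← mul_apply_eq_comp, ← pow_add, ← pow_add, Nat.sub_add_cancel hj, hxk, hk]
      _ ≤ a ^ (k - j) * ‖(T ^ j) x‖ := T.norm_pow_apply_le _ _
  refine ⟨fun l => ((a : 𝕜) ^ (k - l))⁻¹ • (T ^ (k - l)) x, fun l _ => ?_, fun l hl => ?_⟩
  · rw [norm_smul, hpow _ (Nat.sub_le k l), norm_inv, norm_pow, RCLike.norm_ofReal, abs_norm,
      inv_mul_cancel₀ (pow_pos hT _).ne']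
  · have hsucc : k - l = k - (l + 1) + 1 := by omega
    have ha : (a : 𝕜) ≠ 0 := RCLike.ofReal_ne_zero.2 hT.ne'
    rw [map_smul, ← mul_apply_eq_comp, ← pow_succ', ← hsucc, smul_smul]
    congr 1
    rw [hsucc, pow_succ, mul_inv, mul_left_comm, mul_inv_cancel₀ ha, mul_one]

end PowerChain

end ContinuousLinearMap

/- The level `f j` numbers the diagonal block containing the index `j`; then `C` is the
block-shift matrix whose `l`-th superdiagonal block maps level `l + 1` to level `l`. -/
def IsBlockShift {κ 𝕜 : Type*} [Zero 𝕜] (C : Matrix κ κ 𝕜) (f : κ → ℕ) : Prop :=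
  ∀ i j, f j ≠ f i + 1 → C i j = 0

open Finset LinearMap InnerProductSpace in
theorem IsBlockShift.exists_norm_sum_inner_le {𝕜 E κ : Type*} [RCLike 𝕜]
    [NormedAddCommGroup E] [InnerProductSpace 𝕜 E] [FiniteDimensional 𝕜 E] [Fintype κ]
    {C : Matrix κ κ 𝕜} {f : κ → ℕ} (hC : IsBlockShift C f) (x : κ → E) :
    ∃ y : κ → E, (∀ j, ‖y j‖ = ‖x j‖) ∧ ∀ S : E →L[𝕜] E,
      ‖∑ j, ∑ j', C j j' * ⟪x j, S (x j')⟫_𝕜‖ ≤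
        ‖S‖ * RCLike.re (∑ j, ∑ j', C j j' * ⟪y j, y j'⟫_𝕜) := by
  classical
  let X l : E →L[𝕜] E := ∑ j with f j = l, ∑ j', C j j' • rankOne 𝕜 (x j') (x j)
  have htrace l (S : E →L[𝕜] E) : trace 𝕜 E (S ∘L X l) =
      ∑ j with f j = l, ∑ j', C j j' * ⟪x j, S (x j')⟫_𝕜 := by
    simp [X, ContinuousLinearMap.comp_finsetSum, comp_rankOne, trace_rankOne]
  choose U t hUt ht using fun l =>
    ContinuousLinearMap.exists_linearIsometry_trace_comp_eq_and_norm_trace_comp_le (X l)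
  let W l : E →ₗᵢ[𝕜] E := ((List.range l).map U).prod
  have hW l v w : ⟪W l v, W (l + 1) w⟫_𝕜 = ⟪v, U l w⟫_𝕜 := by
    simp [W, List.range_succ, List.prod_append, LinearIsometry.inner_map_map]
  have hsplit (g : κ → 𝕜) : ∑ j, g j = ∑ l ∈ univ.image f, ∑ j with f j = l, g j :=
    (sum_fiberwise_of_maps_to (fun j _ => mem_image_of_mem f (mem_univ j)) g).symm
  refine ⟨fun j => W (f j) (x j), fun j => (W _).norm_map _, fun S => ?_⟩
  have hgram : ∑ j, ∑ j', C j j' * ⟪W (f j) (x j), W (f j') (x j')⟫_𝕜 =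
      ∑ l ∈ univ.image f, (t l : 𝕜) := by
    rw [hsplit]
    refine sum_congr rfl fun l _ => ?_
    rw [← hUt l, htrace]
    refine sum_congr rfl fun j hj => sum_congr rfl fun j' _ => ?_
    obtain rfl := (mem_filter.1 hj).2
    by_cases h : f j' = f j + 1
    · rw [h, hW]
      rfl
    · rw [hC j j' h, zero_mul, zero_mul]
  rw [hgram, map_sum, hsplit, mul_sum]
  refine (norm_sum_le _ _).trans (sum_le_sum fun l _ => ?_)
  rw [← htrace, RCLike.ofReal_re]
  exact ht l S

namespace EuclideanSpace

variable {𝕜 ι κ : Type*}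

def col (z : EuclideanSpace 𝕜 (ι × κ)) (j : κ) : EuclideanSpace 𝕜 ι :=
  WithLp.toLp 2 fun i => z (i, j)

def row (z : EuclideanSpace 𝕜 (ι × κ)) (i : ι) : EuclideanSpace 𝕜 κ :=
  WithLp.toLp 2 fun j => z (i, j)

def ofCols (x : κ → EuclideanSpace 𝕜 ι) : EuclideanSpace 𝕜 (ι × κ) :=
  WithLp.toLp 2 fun p => x p.2 p.1

def ofRows (x : ι → EuclideanSpace 𝕜 κ) : EuclideanSpace 𝕜 (ι × κ) :=
  WithLp.toLp 2 fun p => x p.1 p.2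

@[simp]
theorem col_ofCols (x : κ → EuclideanSpace 𝕜 ι) : col (ofCols x) = x := rfl

@[simp]
theorem row_ofRows (x : ι → EuclideanSpace 𝕜 κ) : row (ofRows x) = x := rfl

variable [RCLike 𝕜] [Fintype ι] [Fintype κ]

theorem norm_sq_eq_sum_col (z : EuclideanSpace 𝕜 (ι × κ)) :
    ‖z‖ ^ 2 = ∑ j, ‖col z j‖ ^ 2 := by
  simp only [PiLp.norm_sq_eq_of_L2, col, Fintype.sum_prod_type]
  exact Finset.sum_comm

theorem norm_sq_eq_sum_row (z : EuclideanSpace 𝕜 (ι × κ)) :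
    ‖z‖ ^ 2 = ∑ i, ‖row z i‖ ^ 2 := by
  simp only [PiLp.norm_sq_eq_of_L2, row, Fintype.sum_prod_type]

theorem norm_ofCols_sq (x : κ → EuclideanSpace 𝕜 ι) : ‖ofCols x‖ ^ 2 = ∑ j, ‖x j‖ ^ 2 := by
  rw [norm_sq_eq_sum_col, col_ofCols]

theorem norm_ofRows_sq (x : ι → EuclideanSpace 𝕜 κ) : ‖ofRows x‖ ^ 2 = ∑ i, ‖x i‖ ^ 2 := by
  rw [norm_sq_eq_sum_row, row_ofRows]

end EuclideanSpace

theorem RCLike.inner_mul_right {𝕜 : Type*} [RCLike 𝕜] (a b c : 𝕜) :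
    ⟪a, b * c⟫_𝕜 = b * ⟪a, c⟫_𝕜 :=
  inner_smul_right a c b

section Kronecker

open EuclideanSpace

variable {𝕜 ι κ : Type*} [RCLike 𝕜] [Fintype ι] [DecidableEq ι] [Fintype κ] [DecidableEq κ]

theorem inner_toEuclideanLin_eq_sum (M : Matrix κ κ 𝕜) (x : EuclideanSpace 𝕜 κ) :
    ⟪x, Matrix.toEuclideanLin M x⟫_𝕜 = ∑ j, ∑ j', M j j' * ⟪x j, x j'⟫_𝕜 := by
  simp only [PiLp.inner_apply, Matrix.toLpLin_apply, Matrix.mulVec, dotProduct, inner_sum,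
    RCLike.inner_mul_right]

theorem inner_toEuclideanLin_kronecker_eq_sum_col (A : Matrix ι ι 𝕜) (C : Matrix κ κ 𝕜)
    (z : EuclideanSpace 𝕜 (ι × κ)) :
    ⟪z, Matrix.toEuclideanLin (A ⊗ₖ C) z⟫_𝕜 =
      ∑ j, ∑ j', C j j' * ⟪col z j, Matrix.toEuclideanLin A (col z j')⟫_𝕜 := by
  simp only [PiLp.inner_apply, Matrix.toLpLin_apply, Matrix.mulVec, dotProduct, inner_sum, col,
    Fintype.sum_prod_type, RCLike.inner_mul_right, Matrix.kroneckerMap_apply, Finset.mul_sum,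
    mul_assoc]
  rw [Finset.sum_comm]
  refine Finset.sum_congr rfl fun j _ => ?_
  rw [Finset.sum_congr rfl fun i _ => Finset.sum_comm, Finset.sum_comm]
  exact Finset.sum_congr rfl fun j' _ => Finset.sum_congr rfl fun i _ =>
    Finset.sum_congr rfl fun i' _ => by ring

theorem inner_toEuclideanLin_kronecker_eq_sum_row (A : Matrix ι ι 𝕜) (C : Matrix κ κ 𝕜)
    (z : EuclideanSpace 𝕜 (ι × κ)) :
    ⟪z, Matrix.toEuclideanLin (A ⊗ₖ C) z⟫_𝕜 =
      ∑ i, ∑ i', A i i' * ⟪row z i, Matrix.toEuclideanLin C (row z i')⟫_𝕜 := by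
  simp only [PiLp.inner_apply, Matrix.toLpLin_apply, Matrix.mulVec, dotProduct, inner_sum, row,
    Fintype.sum_prod_type, RCLike.inner_mul_right, Matrix.kroneckerMap_apply, Finset.mul_sum,
    mul_assoc]
  refine Finset.sum_congr rfl fun i _ => ?_
  rw [Finset.sum_comm]

theorem sum_inner_col_eq_sum_inner_row (C : Matrix κ κ 𝕜) (z : EuclideanSpace 𝕜 (ι × κ)) :
    ∑ j, ∑ j', C j j' * ⟪col z j, col z j'⟫_𝕜 =
      ∑ i, ⟪row z i, Matrix.toEuclideanLin C (row z i)⟫_𝕜 := by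
  have h := inner_toEuclideanLin_kronecker_eq_sum_col (1 : Matrix ι ι 𝕜) C z
  rw [inner_toEuclideanLin_kronecker_eq_sum_row] at h
  simpa [Matrix.one_apply] using h.symm

end Kronecker

section NumRadius

open EuclideanSpace

variable {ι κ : Type*} [Fintype ι] [DecidableEq ι] [Fintype κ] [DecidableEq κ]

theorem norm_inner_toEuclideanLin_le (M : Matrix ι ι ℂ) (x : EuclideanSpace ℂ ι) :
    ‖⟪x, Matrix.toEuclideanLin M x⟫_ℂ‖ ≤ opNorm M * ‖x‖ ^ 2 :=
  calc ‖⟪x, Matrix.toEuclideanLin M x⟫_ℂ‖ ≤ ‖x‖ * (opNorm M * ‖x‖) :=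
        (norm_inner_le_norm _ _).trans
          (by gcongr; exact (Matrix.toEuclideanCLM (𝕜 := ℂ) M).le_opNorm x)
    _ = opNorm M * ‖x‖ ^ 2 := by ring

theorem numRadius_nonneg (M : Matrix ι ι ℂ) : 0 ≤ numRadius M :=
  Real.sSup_nonneg fun _ ⟨_, _, hr⟩ => hr ▸ norm_nonneg _

theorem norm_inner_le_numRadius (M : Matrix ι ι ℂ) {x : EuclideanSpace ℂ ι} (hx : ‖x‖ = 1) :
    ‖⟪x, Matrix.toEuclideanLin M x⟫_ℂ‖ ≤ numRadius M :=
  le_csSup ⟨opNorm M, fun _ ⟨y, hy, hr⟩ => hr ▸ by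
    simpa [hy] using norm_inner_toEuclideanLin_le M y⟩ ⟨x, hx, rfl⟩

theorem norm_inner_le_numRadius_mul_norm_sq (M : Matrix ι ι ℂ) (x : EuclideanSpace ℂ ι) :
    ‖⟪x, Matrix.toEuclideanLin M x⟫_ℂ‖ ≤ numRadius M * ‖x‖ ^ 2 := by
  rcases eq_or_ne x 0 with rfl | hx
  · simp
  have hx' : (‖x‖ : ℂ) ≠ 0 := by exact_mod_cast norm_ne_zero_iff.2 hx
  have hunit : ‖(‖x‖ : ℂ)⁻¹ • x‖ = 1 := by simp [norm_smul, hx]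
  have hscale : ⟪x, Matrix.toEuclideanLin M x⟫_ℂ = (‖x‖ : ℂ) ^ 2 *
      ⟪(‖x‖ : ℂ)⁻¹ • x, Matrix.toEuclideanLin M ((‖x‖ : ℂ)⁻¹ • x)⟫_ℂ := by
    rw [map_smul, inner_smul_left, inner_smul_right, Complex.conj_inv, Complex.conj_ofReal]
    field_simp
  rw [hscale, norm_mul, mul_comm, norm_pow, Complex.norm_real, norm_norm]
  gcongr
  exact norm_inner_le_numRadius M hunit

theorem numRadius_le_of_forall_norm_inner_le {M : Matrix ι ι ℂ} {r : ℝ} (hr : 0 ≤ r)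
    (h : ∀ x, ‖⟪x, Matrix.toEuclideanLin M x⟫_ℂ‖ ≤ r * ‖x‖ ^ 2) : numRadius M ≤ r :=
  Real.sSup_le (fun _ ⟨x, hx, hs⟩ => hs ▸ by simpa [hx] using h x) hr

theorem norm_sum_inner_col_le (C : Matrix κ κ ℂ) (z : EuclideanSpace ℂ (ι × κ)) :
    ‖∑ j, ∑ j', C j j' * ⟪col z j, col z j'⟫_ℂ‖ ≤ numRadius C * ‖z‖ ^ 2 := by
  rw [sum_inner_col_eq_sum_inner_row, norm_sq_eq_sum_row, Finset.mul_sum]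
  exact (norm_sum_le _ _).trans
    (Finset.sum_le_sum fun i _ => norm_inner_le_numRadius_mul_norm_sq C _)

theorem UnitSim.symm {M : Matrix ι ι ℂ} {N : Matrix κ κ ℂ} (h : UnitSim M N) : UnitSim N M := by
  obtain ⟨e, he⟩ := h
  refine ⟨e.symm, fun y => ?_⟩
  rw [LinearIsometryEquiv.eq_symm_apply, ← he, e.apply_symm_apply]

theorem UnitSim.numRadius_le {M : Matrix ι ι ℂ} {N : Matrix κ κ ℂ} (h : UnitSim M N) :
    numRadius M ≤ numRadius N := by
  obtain ⟨e, he⟩ := h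
  refine numRadius_le_of_forall_norm_inner_le (numRadius_nonneg N) fun x => ?_
  rw [← e.inner_map_map, ← he, ← e.norm_map]
  exact norm_inner_le_numRadius_mul_norm_sq N (e x)

theorem UnitSim.numRadius_eq {M : Matrix ι ι ℂ} {N : Matrix κ κ ℂ} (h : UnitSim M N) :
    numRadius M = numRadius N :=
  h.numRadius_le.antisymm h.symm.numRadius_le

theorem UnitSim.numRadius_kronecker_le {M N : Matrix κ κ ℂ} (h : UnitSim M N)
    (A : Matrix ι ι ℂ) : numRadius (A ⊗ₖ M) ≤ numRadius (A ⊗ₖ N) := by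
  obtain ⟨e, he⟩ := h
  refine numRadius_le_of_forall_norm_inner_le (numRadius_nonneg _) fun z => ?_
  let z' := ofRows fun i => e (row z i)
  have hq : ⟪z', Matrix.toEuclideanLin (A ⊗ₖ N) z'⟫_ℂ =
      ⟪z, Matrix.toEuclideanLin (A ⊗ₖ M) z⟫_ℂ := by
    simp only [inner_toEuclideanLin_kronecker_eq_sum_row, z', row_ofRows, he, e.inner_map_map]
  have hz : ‖z'‖ ^ 2 = ‖z‖ ^ 2 := by
    simp only [z', norm_ofRows_sq, e.norm_map, ← norm_sq_eq_sum_row]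
  rw [← hq, ← hz]
  exact norm_inner_le_numRadius_mul_norm_sq _ z'

theorem UnitSim.numRadius_kronecker_eq {M N : Matrix κ κ ℂ} (h : UnitSim M N)
    (A : Matrix ι ι ℂ) : numRadius (A ⊗ₖ M) = numRadius (A ⊗ₖ N) :=
  (h.numRadius_kronecker_le A).antisymm (h.symm.numRadius_kronecker_le A)

theorem IsBlockShift.norm_inner_kronecker_le {C : Matrix κ κ ℂ} {f : κ → ℕ}
    (hC : IsBlockShift C f) (A : Matrix ι ι ℂ) (z : EuclideanSpace ℂ (ι × κ)) :
    ‖⟪z, Matrix.toEuclideanLin (A ⊗ₖ C) z⟫_ℂ‖ ≤ opNorm A * numRadius C * ‖z‖ ^ 2 := by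
  obtain ⟨y, hy, hS⟩ := hC.exists_norm_sum_inner_le (col z)
  have hgram : RCLike.re (∑ j, ∑ j', C j j' * ⟪y j, y j'⟫_ℂ) ≤ numRadius C * ‖z‖ ^ 2 :=
    calc _ ≤ ‖∑ j, ∑ j', C j j' * ⟪y j, y j'⟫_ℂ‖ := RCLike.re_le_norm _
      _ ≤ numRadius C * ‖ofCols y‖ ^ 2 := by simpa using norm_sum_inner_col_le C (ofCols y)
      _ = numRadius C * ‖z‖ ^ 2 := by simp only [norm_ofCols_sq, hy, ← norm_sq_eq_sum_col]
  rw [inner_toEuclideanLin_kronecker_eq_sum_col, mul_assoc]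
  exact (hS (Matrix.toEuclideanCLM (𝕜 := ℂ) A)).trans
    (mul_le_mul_of_nonneg_left hgram (norm_nonneg _))

theorem IsBlockShift.inner_kronecker_ofCols_eq {C : Matrix κ κ ℂ} {f : κ → ℕ}
    (hC : IsBlockShift C f) {A : Matrix ι ι ℂ} {a : ℂ} {y : ℕ → EuclideanSpace ℂ ι}
    (hy : ∀ j, ‖y (f j)‖ = 1)
    (hAy : ∀ j j', f j' = f j + 1 → Matrix.toEuclideanLin A (y (f j')) = a • y (f j))
    (u : EuclideanSpace ℂ κ) :
    ⟪ofCols (fun j => u j • y (f j)),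
        Matrix.toEuclideanLin (A ⊗ₖ C) (ofCols fun j => u j • y (f j))⟫_ℂ =
      a * ⟪u, Matrix.toEuclideanLin C u⟫_ℂ := by
  rw [inner_toEuclideanLin_kronecker_eq_sum_col, inner_toEuclideanLin_eq_sum, Finset.mul_sum]
  refine Finset.sum_congr rfl fun j _ => ?_
  rw [Finset.mul_sum]
  refine Finset.sum_congr rfl fun j' _ => ?_
  by_cases h : f j' = f j + 1
  · simp only [col_ofCols, map_smul, hAy j j' h, inner_smul_left, inner_smul_right,
      inner_self_eq_norm_sq_to_K, hy j, RCLike.inner_apply]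
    push_cast
    ring
  · simp [hC j j' h]

theorem IsBlockShift.opNorm_mul_numRadius_le {C : Matrix κ κ ℂ} {f : κ → ℕ}
    (hC : IsBlockShift C f) {k : ℕ} (hf : ∀ j, f j ≤ k) {A : Matrix ι ι ℂ}
    (hA : opNorm (A ^ k) = opNorm A ^ k) :
    opNorm A * numRadius C ≤ numRadius (A ⊗ₖ C) := by
  rcases (show 0 ≤ opNorm A from norm_nonneg _).eq_or_lt with h0 | hpos
  · rw [← h0, zero_mul]
    exact numRadius_nonneg _
  obtain ⟨y, hy, hAy⟩ :=
    (Matrix.toEuclideanCLM (𝕜 := ℂ) A).exists_norm_eq_one_apply_succ_eq_norm_smul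
      (by simpa only [opNorm, map_pow] using hA) hpos
  rw [mul_comm, ← le_div_iff₀ hpos]
  refine numRadius_le_of_forall_norm_inner_le (div_nonneg (numRadius_nonneg _) hpos.le)
    fun u => ?_
  let z := ofCols fun j => u j • y (f j)
  have hz : ‖z‖ ^ 2 = ‖u‖ ^ 2 := by
    rw [norm_ofCols_sq, EuclideanSpace.norm_sq_eq]
    simp only [norm_smul, hy _ (hf _), mul_one]
  have hq := hC.inner_kronecker_ofCols_eq (A := A) (fun j => hy _ (hf j))
    (fun j j' h => h ▸ hAy _ (by have := hf j'; omega)) u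
  rw [div_mul_eq_mul_div, le_div_iff₀ hpos, ← hz]
  calc ‖⟪u, Matrix.toEuclideanLin C u⟫_ℂ‖ * opNorm A =
        ‖⟪z, Matrix.toEuclideanLin (A ⊗ₖ C) z⟫_ℂ‖ := by
        rw [hq, norm_mul, RCLike.norm_ofReal, abs_norm, mul_comm]
        rfl
    _ ≤ numRadius (A ⊗ₖ C) * ‖z‖ ^ 2 := norm_inner_le_numRadius_mul_norm_sq _ _

end NumRadius

theorem stmt18 (n m k : ℕ) (A : Matrix (Fin n) (Fin n) ℂ) (B : Matrix (Fin m) (Fin m) ℂ)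
    (hshift : ∃ (C : Matrix (Fin m) (Fin m) ℂ) (f : Fin m → ℕ), UnitSim B C ∧
      (∀ i, f i ≤ k) ∧ ∀ i j, (f j : ℕ) ≠ f i + 1 → C i j = 0)
    (hA : opNorm (A ^ k) = opNorm A ^ k) :
    numRadius (A ⊗ₖ B) = opNorm A * numRadius B := by
  obtain ⟨C, f, hBC, hf, hC⟩ := hshift
  rw [hBC.numRadius_eq, hBC.numRadius_kronecker_eq]
  refine le_antisymm ?_ (IsBlockShift.opNorm_mul_numRadius_le hC hf hA)
  exact numRadius_le_of_forall_norm_inner_le (mul_nonneg (norm_nonneg _) (numRadius_nonneg C))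
    (IsBlockShift.norm_inner_kronecker_le hC A)
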